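/- In a simplex-wise graph filtration, suppose edge e1 added at step i-1 is positive and edge e2 added at step i is negative. Then after switching the two additions, e2 is still negative and e1 is still positive in the new filtration. -/

import Mathlib

open SimpleGraph Finset

structure FGraph (V : Type) where
  verts : Finset V
  edges : Finset (Sym2 V)

inductive Step (V : Type) where
  | vertex (v : V)
  | edge (e : Sym2 V)
deriving DecidableEq

variable {V : Type} [DecidableEq V] {m : ℕ}

def FGraph.sg (G : FGraph V) : SimpleGraph V :=
  SimpleGraph.fromEdgeSet (G.edges : Set (Sym2 V))

/-- `x` and `y` lie in the same connected component of `G`. -/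
def FGraph.ConnectedIn (G : FGraph V) (x y : V) : Prop :=
  x ∈ G.verts ∧ y ∈ G.verts ∧ G.sg.Reachable x y

/-- The number of connected components of `G`. -/
noncomputable def FGraph.numComponents (G : FGraph V) : ℕ :=
  Nat.card (Quot fun x y : {v // v ∈ G.verts} => G.sg.Adj x.1 y.1)

/-- First Betti number as an integer: `|E| + #components - |V|`. -/
noncomputable def FGraph.betti1 (G : FGraph V) : ℤ :=
  (G.edges.card : ℤ) + (G.numComponents : ℤ) - (G.verts.card : ℤ)

/-- The edge `e` lies on some cycle of `G`. -/
def FGraph.OnCycle (G : FGraph V) (e : Sym2 V) : Prop :=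
  ∃ (x : V) (c : G.sg.Walk x x), c.IsCycle ∧ e ∈ c.edges

def FGraph.addStep (G : FGraph V) : Step V → FGraph V
  | .vertex v => ⟨insert v G.verts, G.edges⟩
  | .edge e => ⟨G.verts, insert e G.edges⟩

def StepValid (G : FGraph V) : Step V → Prop
  | .vertex v => v ∉ G.verts
  | .edge e => e ∉ G.edges ∧ ¬ e.IsDiag ∧ ∀ v ∈ e, v ∈ G.verts

/-- A simplex-wise standard graph filtration of length `m`. -/
structure Filtration (V : Type) (m : ℕ) where
  steps : Fin m → Step V

namespace Filtration

def graphAt (F : Filtration V m) : ℕ → FGraph V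
  | 0 => ⟨∅, ∅⟩
  | i + 1 => if h : i < m then (F.graphAt i).addStep (F.steps ⟨i, h⟩) else F.graphAt i

def Valid (F : Filtration V m) : Prop :=
  ∀ i : Fin m, StepValid (F.graphAt (i : ℕ)) (F.steps i)

/-- The addition index of vertex `x`. -/
noncomputable def vidx (F : Filtration V m) (x : V) : ℕ :=
  sInf {n : ℕ | ∃ i : Fin m, (i : ℕ) = n ∧ F.steps i = Step.vertex x}

/-- The addition index of edge `e`. -/
noncomputable def eidx (F : Filtration V m) (e : Sym2 V) : ℕ :=
  sInf {n : ℕ | ∃ i : Fin m, (i : ℕ) = n ∧ F.steps i = Step.edge e}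

/-- Step `i` adds a negative edge: one merging two connected components. -/
def NegativeAt (F : Filtration V m) (i : Fin m) : Prop :=
  ∃ e, F.steps i = Step.edge e ∧
    (F.graphAt ((i : ℕ) + 1)).numComponents < (F.graphAt (i : ℕ)).numComponents

/-- Step `i` adds a positive edge: one not changing the number of components. -/
def PositiveAt (F : Filtration V m) (i : Fin m) : Prop :=
  ∃ e, F.steps i = Step.edge e ∧
    (F.graphAt ((i : ℕ) + 1)).numComponents = (F.graphAt (i : ℕ)).numComponents

/-- `x` is the oldest vertex of its connected component in `G_i`. -/
def OldestIn (F : Filtration V m) (i : ℕ) (x : V) : Prop :=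
  x ∈ (F.graphAt i).verts ∧
    ∀ y, (F.graphAt i).ConnectedIn x y → F.vidx x ≤ F.vidx y

/-- `x` is the vertex paired with the negative edge added at step `j`:
`x` is the younger of the two oldest vertices of the merged components. -/
def PairedAt (F : Filtration V m) (j : Fin m) (x : V) : Prop :=
  ∃ u v, F.steps j = Step.edge s(u, v) ∧
    ¬ (F.graphAt (j : ℕ)).ConnectedIn u v ∧
    (F.graphAt (j : ℕ)).ConnectedIn x u ∧ F.OldestIn (j : ℕ) x ∧
    ∃ y, (F.graphAt (j : ℕ)).ConnectedIn y v ∧ F.OldestIn (j : ℕ) y ∧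
      F.vidx y < F.vidx x

/-- `x` is unpaired at stage `i`: not paired with any negative edge added before `i`. -/
def UnpairedAt (F : Filtration V m) (i : ℕ) (x : V) : Prop :=
  ∀ j : Fin m, (j : ℕ) < i → ¬ F.PairedAt j x

/-- Step `i` contributes a node of the merge forest (a vertex leaf or a
negative edge internal node). -/
def IsNode (F : Filtration V m) (i : Fin m) : Prop :=
  (∃ v, F.steps i = Step.vertex v) ∨ F.NegativeAt i

/-- `x` is a representative vertex of the merge-forest node at level `i`. -/
def RepOf (F : Filtration V m) (i : Fin m) (x : V) : Prop :=
  F.steps i = Step.vertex x ∨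
    ∃ u v, F.steps i = Step.edge s(u, v) ∧
      ¬ (F.graphAt (i : ℕ)).ConnectedIn u v ∧ (x = u ∨ x = v)

/-- The merge-forest node at level `j` is a child of the (negative-edge)
node at level `i`: `j`'s component at time `i` is one of the two components
merged by the edge at step `i`, and no node of level strictly between `j`
and `i` lies in that component. -/
def MFChild (F : Filtration V m) (j i : Fin m) : Prop :=
  (j : ℕ) < (i : ℕ) ∧ F.IsNode j ∧
  ∃ u v, F.steps i = Step.edge s(u, v) ∧
    ¬ (F.graphAt (i : ℕ)).ConnectedIn u v ∧
    ∃ x, F.RepOf j x ∧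
      ((F.graphAt (i : ℕ)).ConnectedIn x u ∨ (F.graphAt (i : ℕ)).ConnectedIn x v) ∧
      ∀ j' : Fin m, (j : ℕ) < (j' : ℕ) → (j' : ℕ) < (i : ℕ) → F.IsNode j' →
        ∀ y, F.RepOf j' y → ¬ (F.graphAt (i : ℕ)).ConnectedIn x y

end Filtration

open Relation Function

-- helpers
private lemma trans' {α : Type*} {r : α → α → Prop} {a b c : α}
    (h : EqvGen r a b) (h' : EqvGen r b c) : EqvGen r a c := EqvGen.trans _ _ _ h h'
private lemma symm' {α : Type*} {r : α → α → Prop} {a b : α}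
    (h : EqvGen r a b) : EqvGen r b a := EqvGen.symm _ _ h

private lemma decomp {α : Type*} {r r' : α → α → Prop} {u v : α}
    (hr' : ∀ x y, r' x y → r x y ∨ (x = u ∧ y = v) ∨ (x = v ∧ y = u))
    {x y : α} (h : EqvGen r' x y) :
    EqvGen r x y ∨ (EqvGen r x u ∧ EqvGen r v y) ∨ (EqvGen r x v ∧ EqvGen r u y) := by
  induction h with
  | rel a b hab =>
    rcases hr' a b hab with h | ⟨rfl, rfl⟩ | ⟨rfl, rfl⟩
    · exact Or.inl (EqvGen.rel _ _ h)
    · exact Or.inr (Or.inl ⟨EqvGen.refl _, EqvGen.refl _⟩)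
    · exact Or.inr (Or.inr ⟨EqvGen.refl _, EqvGen.refl _⟩)
  | refl a => exact Or.inl (EqvGen.refl a)
  | symm a b _ ih =>
    rcases ih with h | ⟨h1, h2⟩ | ⟨h1, h2⟩
    · exact Or.inl (symm' h)
    · exact Or.inr (Or.inr ⟨symm' h2, symm' h1⟩)
    · exact Or.inr (Or.inl ⟨symm' h2, symm' h1⟩)
  | trans a b c _ _ ih1 ih2 =>
    rcases ih1 with h | ⟨h1, h2⟩ | ⟨h1, h2⟩ <;>
      rcases ih2 with g | ⟨g1, g2⟩ | ⟨g1, g2⟩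
    · exact Or.inl (trans' h g)
    · exact Or.inr (Or.inl ⟨trans' h g1, g2⟩)
    · exact Or.inr (Or.inr ⟨trans' h g1, g2⟩)
    · exact Or.inr (Or.inl ⟨h1, trans' h2 g⟩)
    · exact Or.inl (trans' h1 (trans' (symm' (trans' h2 g1)) g2))
    · exact Or.inl (trans' h1 g2)
    · exact Or.inr (Or.inr ⟨h1, trans' h2 g⟩)
    · exact Or.inl (trans' h1 g2)
    · exact Or.inl (trans' h1 (trans' (symm' (trans' h2 g1)) g2))

def qrel (A : FGraph V) : {v // v ∈ A.verts} → {v // v ∈ A.verts} → Prop :=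
  fun x y => A.sg.Adj x.1 y.1

lemma numComponents_eq (A : FGraph V) : A.numComponents = Nat.card (Quot (qrel A)) := rfl

def FGraph.addStep' (G : FGraph V) (e : Sym2 V) : FGraph V := ⟨G.verts, insert e G.edges⟩

section CardLemmas

variable (A : FGraph V) (u v : V)

-- the canonical map between component quotients
noncomputable def qmap (A : FGraph V) (e : Sym2 V) :
    Quot (qrel A) → Quot (qrel (A.addStep' e)) :=
  Quot.map id (fun x y h => by
    simp only [qrel, FGraph.sg, SimpleGraph.fromEdgeSet_adj, Finset.coe_insert,
      FGraph.addStep', Set.mem_insert_iff, Finset.mem_coe] at h ⊢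
    tauto)

lemma qmap_mk (A : FGraph V) (e : Sym2 V) (x : {v // v ∈ A.verts}) :
    qmap A e (Quot.mk _ x) = Quot.mk _ x := rfl

lemma qmap_surj (A : FGraph V) (e : Sym2 V) : Surjective (qmap A e) := by
  intro c
  induction c using Quot.ind with
  | _ x => exact ⟨Quot.mk _ x, rfl⟩

lemma qrel_addStep'_decomp (hu : u ∈ A.verts) (hv : v ∈ A.verts) {x y : {w // w ∈ A.verts}}
    (h : qrel (A.addStep' s(u,v)) x y) :
    qrel A x y ∨ (x = ⟨u, hu⟩ ∧ y = ⟨v, hv⟩) ∨ (x = ⟨v, hv⟩ ∧ y = ⟨u, hu⟩) := by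
  simp only [qrel, FGraph.sg, SimpleGraph.fromEdgeSet_adj, FGraph.addStep',
    Finset.coe_insert, Set.mem_insert_iff, Finset.mem_coe] at h ⊢
  obtain ⟨h1 | h1, hne⟩ := h
  · rw [Sym2.eq_iff] at h1
    rcases h1 with ⟨hx, hy⟩ | ⟨hx, hy⟩
    · exact Or.inr (Or.inl ⟨Subtype.ext hx, Subtype.ext hy⟩)
    · exact Or.inr (Or.inr ⟨Subtype.ext hx, Subtype.ext hy⟩)
  · exact Or.inl ⟨h1, hne⟩

lemma card_le_of_eqvGen (hu : u ∈ A.verts) (hv : v ∈ A.verts) (h : EqvGen (qrel A) ⟨u, hu⟩ ⟨v, hv⟩) :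
    A.numComponents ≤ (A.addStep' s(u,v)).numComponents := by
  rw [numComponents_eq, numComponents_eq]
  apply Nat.card_le_card_of_injective (qmap A s(u,v))
  intro c1 c2 hc
  induction c1 using Quot.ind with | _ x => ?_
  induction c2 using Quot.ind with | _ y => ?_
  rw [qmap_mk, qmap_mk] at hc
  replace hc := Quot.eq.mp hc
  rcases decomp (fun _ _ h => qrel_addStep'_decomp A u v hu hv h) hc with g | ⟨g1, g2⟩ | ⟨g1, g2⟩
  · exact Quot.eq.mpr g
  · exact Quot.eq.mpr (trans' g1 (trans' h g2))
  · exact Quot.eq.mpr (trans' g1 (trans' (symm' h) g2))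

lemma card_lt_of_not_eqvGen (hu : u ∈ A.verts) (hv : v ∈ A.verts) (hne : u ≠ v)
    (h : ¬ EqvGen (qrel A) ⟨u, hu⟩ ⟨v, hv⟩) :
    (A.addStep' s(u,v)).numComponents < A.numComponents := by
  classical
  haveI : Fintype (Quot (qrel A)) := Fintype.ofFinite _
  haveI : Fintype (Quot (qrel (A.addStep' s(u,v)))) := Fintype.ofFinite _
  rw [numComponents_eq, numComponents_eq, Nat.card_eq_fintype_card, Nat.card_eq_fintype_card]
  apply Fintype.card_lt_of_surjective_not_injective (qmap A s(u,v)) (qmap_surj A _)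
  intro hinj
  apply h
  have hadj : qrel (A.addStep' s(u,v)) ⟨u, hu⟩ ⟨v, hv⟩ := by
    simp [qrel, FGraph.sg, SimpleGraph.fromEdgeSet_adj, FGraph.addStep', hne]
  have : qmap A s(u,v) (Quot.mk _ ⟨u, hu⟩) = qmap A s(u,v) (Quot.mk _ ⟨v, hv⟩) := by
    rw [qmap_mk, qmap_mk]
    exact Quot.sound hadj
  exact Quot.eq.mp (hinj this)

lemma card_le_card_add_one (hu : u ∈ A.verts) (hv : v ∈ A.verts) :
    A.numComponents ≤ (A.addStep' s(u,v)).numComponents + 1 := by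
  classical
  haveI : Fintype (Quot (qrel A)) := Fintype.ofFinite _
  haveI : Fintype (Quot (qrel (A.addStep' s(u,v)))) := Fintype.ofFinite _
  rw [numComponents_eq, numComponents_eq, Nat.card_eq_fintype_card, Nat.card_eq_fintype_card]
  set cv : Quot (qrel A) := Quot.mk _ ⟨v, hv⟩ with hcv
  have hinj : Injective (fun c : {c : Quot (qrel A) // c ≠ cv} => qmap A s(u,v) c.1) := by
    rintro ⟨c1, h1⟩ ⟨c2, h2⟩ hc
    simp only at hc
    induction c1 using Quot.ind with | _ x => ?_
    induction c2 using Quot.ind with | _ y => ?_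
    rw [qmap_mk, qmap_mk] at hc
    replace hc := Quot.eq.mp hc
    apply Subtype.ext
    simp only
    rcases decomp (fun _ _ h => qrel_addStep'_decomp A u v hu hv h) hc with g | ⟨g1, g2⟩ | ⟨g1, g2⟩
    · exact Quot.eq.mpr g
    · exact absurd (Quot.eq.mpr (symm' g2)) h2
    · exact absurd (Quot.eq.mpr g1) h1
  have hle := Fintype.card_le_of_injective _ hinj
  have h1 : Fintype.card {c : Quot (qrel A) // c ≠ cv}
      = Fintype.card (Quot (qrel A)) - Fintype.card {c : Quot (qrel A) // c = cv} :=
    Fintype.card_subtype_compl _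
  have h2 : Fintype.card {c : Quot (qrel A) // c = cv} = 1 := Fintype.card_subtype_eq cv
  have hpos : 0 < Fintype.card (Quot (qrel A)) :=
    Fintype.card_pos_iff.mpr ⟨cv⟩
  omega

end CardLemmas

lemma Filtration.graphAt_succ (F : Filtration V m) {j : ℕ} (hj : j < m) :
    F.graphAt (j+1) = (F.graphAt j).addStep (F.steps ⟨j, hj⟩) := by
  simp only [Filtration.graphAt, dif_pos hj]

lemma Filtration.graphAt_congr (F F' : Filtration V m) :
    ∀ j : ℕ, (∀ k : Fin m, (k : ℕ) < j → F'.steps k = F.steps k) →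
      F'.graphAt j = F.graphAt j
  | 0, _ => rfl
  | j+1, h => by
    have ih := Filtration.graphAt_congr F F' j (fun k hk => h k (Nat.lt_succ_of_lt hk))
    by_cases hj : j < m
    · rw [Filtration.graphAt_succ F' hj, Filtration.graphAt_succ F hj, ih,
        h ⟨j, hj⟩ (Nat.lt_succ_self j)]
    · simp only [Filtration.graphAt, dif_neg hj, ih]


/-- switching a positive edge `e1` with a following negative edge
`e2` keeps `e2` negative and `e1` positive in the new filtration. -/
theorem stmt_7 {V : Type} [DecidableEq V] {m : ℕ} (F F' : Filtration V m)
    (hF : F.Valid) (i1 i2 : Fin m) (h12 : (i2 : ℕ) = (i1 : ℕ) + 1)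
    (e1 e2 : Sym2 V) (h1 : F.steps i1 = Step.edge e1)
    (h2 : F.steps i2 = Step.edge e2)
    (hp : F.PositiveAt i1) (hn : F.NegativeAt i2)
    (hswap : ∀ k : Fin m, F'.steps k =
      if k = i1 then Step.edge e2
      else if k = i2 then Step.edge e1
      else F.steps k) :
    F'.NegativeAt i1 ∧ F'.PositiveAt i2 := by
  induction e2 using Sym2.ind with | _ u v => ?_
  have hi1m : (i1 : ℕ) < m := i1.isLt
  have hi2m : (i2 : ℕ) < m := i2.isLt
  have hne12 : i2 ≠ i1 := by
    intro h
    apply_fun Fin.val at h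
    omega
  -- graphs of F
  have hG1 : F.graphAt ((i1:ℕ)+1) = (F.graphAt (i1:ℕ)).addStep (.edge e1) := by
    rw [Filtration.graphAt_succ F hi1m]
    rw [show (⟨(i1:ℕ), hi1m⟩ : Fin m) = i1 from rfl, h1]
  have hGi2 : F.graphAt (i2:ℕ) = (F.graphAt (i1:ℕ)).addStep (.edge e1) := by
    rw [h12]; exact hG1
  have hG2 : F.graphAt ((i2:ℕ)+1)
      = ((F.graphAt (i1:ℕ)).addStep (.edge e1)).addStep (.edge s(u,v)) := by
    rw [Filtration.graphAt_succ F hi2m]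
    rw [show (⟨(i2:ℕ), hi2m⟩ : Fin m) = i2 from rfl, h2, hGi2]
  -- validity data for e2 at step i2
  have hvalid2 := hF i2
  rw [h2] at hvalid2
  obtain ⟨-, hnd, hmem⟩ := hvalid2
  have hne : u ≠ v := fun h => hnd (Sym2.mk_isDiag_iff.mpr h)
  have hu : u ∈ (F.graphAt (i1:ℕ)).verts := by
    have := hmem u (Sym2.mem_mk_left u v)
    rw [hGi2] at this
    exact this
  have hv : v ∈ (F.graphAt (i1:ℕ)).verts := by
    have := hmem v (Sym2.mem_mk_right u v)
    rw [hGi2] at this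
    exact this
  -- numeric facts for F
  obtain ⟨ep, hep, hpc⟩ := hp
  obtain ⟨en, hen, hnc⟩ := hn
  rw [hG1] at hpc
  rw [hG2, hGi2] at hnc
  -- e2's endpoints are not connected in G1, hence not in G
  have hu1 : u ∈ ((F.graphAt (i1:ℕ)).addStep (.edge e1)).verts := hu
  have hv1 : v ∈ ((F.graphAt (i1:ℕ)).addStep (.edge e1)).verts := hv
  have hnc' : ((((F.graphAt (i1:ℕ)).addStep (.edge e1)).addStep' s(u,v)).numComponents)
      < (((F.graphAt (i1:ℕ)).addStep (.edge e1)).numComponents) := hnc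
  have hnotE1 : ¬ EqvGen (qrel ((F.graphAt (i1:ℕ)).addStep (.edge e1))) ⟨u, hu1⟩ ⟨v, hv1⟩ := by
    intro h
    exact absurd (card_le_of_eqvGen ((F.graphAt (i1:ℕ)).addStep (.edge e1)) u v hu1 hv1 h)
      (not_le.mpr hnc')
  have hnotE : ¬ EqvGen (qrel (F.graphAt (i1:ℕ))) ⟨u, hu⟩ ⟨v, hv⟩ := by
    intro h
    apply hnotE1
    refine Relation.EqvGen.mono ?_ _ _ h
    intro a b hab
    simp only [qrel, FGraph.sg, SimpleGraph.fromEdgeSet_adj, FGraph.addStep,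
      Finset.coe_insert, Set.mem_insert_iff, Finset.mem_coe] at hab ⊢
    tauto
  -- core inequalities
  have hlt : ((F.graphAt (i1:ℕ)).addStep' s(u,v)).numComponents
      < (F.graphAt (i1:ℕ)).numComponents :=
    card_lt_of_not_eqvGen _ u v hu hv hne hnotE
  have hle1 : (F.graphAt (i1:ℕ)).numComponents
      ≤ ((F.graphAt (i1:ℕ)).addStep' s(u,v)).numComponents + 1 :=
    card_le_card_add_one _ u v hu hv
  have hle2 : ((F.graphAt (i1:ℕ)).addStep (.edge e1)).numComponents
      ≤ (((F.graphAt (i1:ℕ)).addStep (.edge e1)).addStep' s(u,v)).numComponents + 1 :=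
    card_le_card_add_one _ u v hu hv
  -- graphs of F'
  have hG' : F'.graphAt (i1:ℕ) = F.graphAt (i1:ℕ) := by
    apply Filtration.graphAt_congr
    intro k hk
    rw [hswap k, if_neg, if_neg]
    · intro h; apply_fun Fin.val at h; omega
    · intro h; apply_fun Fin.val at h; omega
  have hs1 : F'.steps i1 = Step.edge s(u,v) := by rw [hswap, if_pos rfl]
  have hs2 : F'.steps i2 = Step.edge e1 := by rw [hswap, if_neg hne12, if_pos rfl]
  have hG'1 : F'.graphAt ((i1:ℕ)+1) = (F.graphAt (i1:ℕ)).addStep (.edge s(u,v)) := by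
    rw [Filtration.graphAt_succ F' hi1m]
    rw [show (⟨(i1:ℕ), hi1m⟩ : Fin m) = i1 from rfl, hs1, hG']
  have hG'2 : F'.graphAt ((i2:ℕ)+1)
      = ((F.graphAt (i1:ℕ)).addStep (.edge s(u,v))).addStep (.edge e1) := by
    rw [Filtration.graphAt_succ F' hi2m]
    rw [show (⟨(i2:ℕ), hi2m⟩ : Fin m) = i2 from rfl, hs2, h12, hG'1]
  -- the two final graphs coincide
  have hkey : ((F.graphAt (i1:ℕ)).addStep (.edge s(u,v))).addStep (.edge e1)
      = ((F.graphAt (i1:ℕ)).addStep (.edge e1)).addStep' s(u,v) := by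
    simp only [FGraph.addStep, FGraph.addStep']
    rw [Finset.insert_comm]
  constructor
  · refine ⟨s(u,v), hs1, ?_⟩
    rw [hG'1, hG']
    exact hlt
  · refine ⟨e1, hs2, ?_⟩
    rw [hG'2, h12, hG'1, hkey]
    have : ((F.graphAt (i1:ℕ)).addStep (.edge s(u,v)))
        = ((F.graphAt (i1:ℕ)).addStep' s(u,v)) := rfl
    rw [this]
    omega
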